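/- arXiv:math/0501007 — 6 statements merged into one kernel-verified Lean document; each statement's English description precedes it below -/
import Mathlib

section
/- Let M1, M2, M3, M4 ∈ SL(2,ℂ) satisfy M4·M3·M2·M1 = I. Define x1 = Tr(M2·M3), x2 = Tr(M3·M1), x3 = Tr(M1·M2), and a_i = Tr(M_i) for i = 1,2,3,4. Set θ_i = a_i·a_4 + a_j·a_k for {i,j,k} = {1,2,3} and θ_4 = a_1·a_2·a_3·a_4 + a_1² + a_2² + a_3² + a_4² − 4. Then x1·x2·x3 + x1² + x2² + x3² − θ1·x1 − θ2·x2 − θ3·x3 + θ4 = 0. -/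
open Matrix

theorem fricke_klein_relation
    (M1 M2 M3 M4 : Matrix (Fin 2) (Fin 2) ℂ)
    (h1 : M1.det = 1) (h2 : M2.det = 1) (h3 : M3.det = 1) (h4 : M4.det = 1)
    (hprod : M4 * M3 * M2 * M1 = 1)
    (x1 x2 x3 a1 a2 a3 a4 θ1 θ2 θ3 θ4 : ℂ)
    (hx1 : x1 = (M2 * M3).trace) (hx2 : x2 = (M3 * M1).trace)
    (hx3 : x3 = (M1 * M2).trace)
    (ha1 : a1 = M1.trace) (ha2 : a2 = M2.trace)
    (ha3 : a3 = M3.trace) (ha4 : a4 = M4.trace)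
    (hθ1 : θ1 = a1 * a4 + a2 * a3)
    (hθ2 : θ2 = a2 * a4 + a3 * a1)
    (hθ3 : θ3 = a3 * a4 + a1 * a2)
    (hθ4 : θ4 = a1 * a2 * a3 * a4 + a1^2 + a2^2 + a3^2 + a4^2 - 4) :
    x1 * x2 * x3 + x1^2 + x2^2 + x3^2 - θ1 * x1 - θ2 * x2 - θ3 * x3 + θ4 = 0 := by
  have hX : (M3 * M2 * M1).det = 1 := by
    simp [Matrix.det_mul, h1, h2, h3]
  have hM4 : M4 = (M3 * M2 * M1).adjugate := by
    calc M4 = M4 * ((M3 * M2 * M1) * (M3 * M2 * M1).adjugate) := by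
          rw [Matrix.mul_adjugate, hX, one_smul, mul_one]
      _ = (M4 * M3 * M2 * M1) * (M3 * M2 * M1).adjugate := by
          rw [← mul_assoc, ← mul_assoc, ← mul_assoc]
      _ = (M3 * M2 * M1).adjugate := by rw [hprod, one_mul]
  have ha4' : a4 = (M3 * M2 * M1).trace := by
    rw [ha4, hM4, Matrix.adjugate_fin_two, Matrix.trace_fin_two, Matrix.trace_fin_two]
    simp
    ring
  subst hx1 hx2 hx3 ha1 ha2 ha3 hθ1 hθ2 hθ3 hθ4
  rw [ha4']
  rw [Matrix.det_fin_two] at h1 h2 h3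
  simp only [Matrix.trace_fin_two, Matrix.mul_apply, Fin.sum_univ_two]
  linear_combination ((2) + (-1) * (M3 1 1)^2 + (-1) * (M3 0 0)^2 + (-1) * (M2 1 1)^2 + (M2 1 1)^2 * (M3 0 0) * (M3 1 1) + (-1) * (M2 1 0) * (M2 1 1) * (M3 0 1) * (M3 1 1) + (M2 1 0) * (M2 1 1) * (M3 0 0) * (M3 0 1) + (-1) * (M2 1 0)^2 * (M3 0 1)^2 + (-1) * (M2 0 1) * (M2 1 1) * (M3 1 0) * (M3 1 1) + (M2 0 1) * (M2 1 1) * (M3 0 0) * (M3 1 0) + (-1) * (M2 0 1)^2 * (M3 1 0)^2 + (M2 0 0) * (M2 1 1) * (M3 1 1)^2 + (-2) * (M2 0 0) * (M2 1 1) * (M3 0 0) * (M3 1 1) + (M2 0 0) * (M2 1 1) * (M3 0 0)^2 + (M2 0 0) * (M2 1 0) * (M3 0 1) * (M3 1 1) + (-1) * (M2 0 0) * (M2 1 0) * (M3 0 0) * (M3 0 1) + (M2 0 0) * (M2 0 1) * (M3 1 0) * (M3 1 1) + (-1) * (M2 0 0) * (M2 0 1) * (M3 0 0) * (M3 1 0)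 + (-1) * (M2 0 0)^2 + (M2 0 0)^2 * (M3 0 0) * (M3 1 1)) * h1 + ((2) + (-2) * (M3 0 0) * (M3 1 1) + (-1) * (M1 1 1)^2 + (M1 1 1)^2 * (M3 0 0) * (M3 1 1) + (-1) * (M1 1 0) * (M1 1 1) * (M3 0 1) * (M3 1 1) + (M1 1 0) * (M1 1 1) * (M3 0 0) * (M3 0 1) + (-1) * (M1 1 0)^2 * (M3 0 1)^2 + (-1) * (M1 0 1) * (M1 1 1) * (M3 1 0) * (M3 1 1) + (M1 0 1) * (M1 1 1) * (M3 0 0) * (M3 1 0) + (M1 0 1) * (M1 1 0) * (M3 1 1)^2 + (-2) * (M1 0 1) * (M1 1 0) * (M3 0 0) * (M3 1 1) + (M1 0 1) * (M1 1 0) * (M3 0 0)^2 + (-1) * (M1 0 1)^2 * (M3 1 0)^2 + (M1 0 0) * (M1 1 0) * (M3 0 1) * (M3 1 1) + (-1) * (M1 0 0) * (M1 1 0) * (M3 0 0) * (M3 0 1) + (M1 0 0) * (M1 0 1) * (M3 1 0) * (M3 1 1) + (-1) * (M1 0 0) * (M1 0 1) * (M3 0 0) * (M3 1 0) + (-1)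 * (M1 0 0)^2 + (M1 0 0)^2 * (M3 0 0) * (M3 1 1)) * h2 + ((-2) * (M2 0 1) * (M2 1 0) + (M1 1 1)^2 * (M2 0 1) * (M2 1 0) + (-1) * (M1 1 0) * (M1 1 1) * (M2 0 1) * (M2 1 1) + (M1 1 0) * (M1 1 1) * (M2 0 0) * (M2 0 1) + (-1) * (M1 1 0)^2 * (M2 0 1)^2 + (-1) * (M1 0 1) * (M1 1 1) * (M2 1 0) * (M2 1 1) + (M1 0 1) * (M1 1 1) * (M2 0 0) * (M2 1 0) + (-2) * (M1 0 1) * (M1 1 0) + (M1 0 1) * (M1 1 0) * (M2 1 1)^2 + (-2) * (M1 0 1) * (M1 1 0) * (M2 0 1) * (M2 1 0) + (M1 0 1) * (M1 1 0) * (M2 0 0)^2 + (-1) * (M1 0 1)^2 * (M2 1 0)^2 + (M1 0 0) * (M1 1 0) * (M2 0 1) * (M2 1 1) + (-1) * (M1 0 0) * (M1 1 0) * (M2 0 0) * (M2 0 1) + (M1 0 0) * (M1 0 1) * (M2 1 0) * (M2 1 1) + (-1) * (M1 0 0) * (M1 0 1) * (M2 0 0) * (M2 1 0) + (M1 0 0)^2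 * (M2 0 1) * (M2 1 0)) * h3
end

section
/- Fix a cyclic permutation (i,j,k) of (1,2,3). Define the cubic polynomial f(x,θ) = x1·x2·x3 + x1² + x2² + x3² − θ1·x1 − θ2·x2 − θ3·x3 + θ4 in variables x = (x1,x2,x3) and parameters θ = (θ1,θ2,θ3,θ4). Define g_i : ℂ⁷ → ℂ⁷ by sending (x,θ) to (x',θ') where x'_i = θ_j − x_j − x_k·x_i, x'_j = x_i, x'_k = x_k, θ'_i = θ_j, θ'_j = θ_i, θ'_k = θ_k, θ'_4 = θ_4. Then f(x',θ') = f(x,θ) for all (x,θ) ∈ ℂ⁷. -/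
/-- The Fricke cubic polynomial `f(x, θ)`. Indices are shifted: `x 0 = x₁`, …,
`θ 0 = θ₁`, …, `θ 3 = θ₄`. -/
def frickeCubic (x : Fin 3 → ℂ) (θ : Fin 4 → ℂ) : ℂ :=
  x 0 * x 1 * x 2 + (x 0) ^ 2 + (x 1) ^ 2 + (x 2) ^ 2
    - θ 0 * x 0 - θ 1 * x 1 - θ 2 * x 2 + θ 3

/-- The polynomial automorphism `gᵢ` of `ℂ⁷ = ℂ³ₓ × ℂ⁴_θ`, for the cyclic
permutation `(i, j, k) = (i, i+1, i+2)` of the three indices (`Fin 3` addition is cyclic):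
`x'ᵢ = θⱼ − xⱼ − x_k·xᵢ`, `x'ⱼ = xᵢ`, `x'_k = x_k`, with `θᵢ, θⱼ` swapped and
`θ_k, θ₄` fixed. -/
def modularAut (i : Fin 3) (p : (Fin 3 → ℂ) × (Fin 4 → ℂ)) :
    (Fin 3 → ℂ) × (Fin 4 → ℂ) :=
  ⟨fun m => if m = i then p.2 (Fin.castSucc (i + 1)) - p.1 (i + 1) - p.1 (i + 2) * p.1 i
            else if m = i + 1 then p.1 i else p.1 m,
   fun m => if m = Fin.castSucc i then p.2 (Fin.castSucc (i + 1))
            else if m = Fin.castSucc (i + 1) then p.2 (Fin.castSucc i) else p.2 m⟩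

/-- `f` is invariant under each automorphism `gᵢ`. -/
theorem frickeCubic_invariant (i : Fin 3) (x : Fin 3 → ℂ) (θ : Fin 4 → ℂ) :
    frickeCubic (modularAut i (x, θ)).1 (modularAut i (x, θ)).2 = frickeCubic x θ := by
  fin_cases i <;> simp [frickeCubic, modularAut, Fin.castSucc, Fin.castAdd, Fin.castLE, Fin.isValue] <;> ring
end

section
/- With the maps g1, g2, g3 : ℂ⁷ → ℂ⁷ defined by g_i(x,θ) = (x',θ') where x'_i = θ_j − x_j − x_k·x_i, x'_j = x_i, x'_k = x_k, θ'_i = θ_j, θ'_j = θ_i, θ'_k = θ_k, θ'_4 = θ_4 (for (i,j,k) a cyclic permutation of (1,2,3)), the braid relation g_i ∘ g_j ∘ g_i = g_j ∘ g_i ∘ g_j holds for each cyclic permutation (i,j,k) of (1,2,3). -/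
set_option maxHeartbeats 2000000 in
/-- Braid relation `gᵢ ∘ gⱼ ∘ gᵢ = gⱼ ∘ gᵢ ∘ gⱼ` for each cyclic permutation
`(i, j, k) = (i, i+1, i+2)` of `(1,2,3)`. -/
theorem modularAut_braid (i : Fin 3) :
    modularAut i ∘ modularAut (i + 1) ∘ modularAut i =
      modularAut (i + 1) ∘ modularAut i ∘ modularAut (i + 1) := by
  funext p
  fin_cases i <;>
  · refine Prod.ext (funext fun m => ?_) (funext fun m => ?_) <;> fin_cases m <;>
    · simp [modularAut]
      try ring
      try tauto
      try norm_num
end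

section
/- With g1, g2, g3 : ℂ⁷ → ℂ⁷ as above (g_i(x,θ) = (x',θ') with x'_i = θ_j − x_j − x_k·x_i, x'_j = x_i, x'_k = x_k, and θ_i, θ_j swapped, θ_k, θ_4 fixed, for (i,j,k) a cyclic permutation of (1,2,3)), the relation (g_i ∘ g_j)³ = id_{ℂ⁷} holds for each cyclic permutation (i,j,k) of (1,2,3). -/
/-- The relation `(gᵢ ∘ gⱼ)³ = id` for each cyclic permutation
`(i, j, k) = (i, i+1, i+2)` of `(1,2,3)`. -/
theorem modularAut_order_three (i : Fin 3) :
    (modularAut i ∘ modularAut (i + 1)) ∘ (modularAut i ∘ modularAut (i + 1)) ∘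
      (modularAut i ∘ modularAut (i + 1)) = id := by
  fin_cases i <;>
  · funext p
    obtain ⟨x, θ⟩ := p
    refine Prod.ext (funext fun m => ?_) (funext fun m => ?_) <;> fin_cases m <;>
      simp [modularAut, Fin.isValue,
        show (Fin.castSucc 2 : Fin 4) = 2 from rfl] <;>
      first | ring1 | rfl
end

section
/- Each map g_i : ℂ⁷ → ℂ⁷ defined by g_i(x,θ) = (x',θ') with x'_i = θ_j − x_j − x_k·x_i, x'_j = x_i, x'_k = x_k, θ'_i = θ_j, θ'_j = θ_i, θ'_k = θ_k, θ'_4 = θ_4 is a bijection, and for each cyclic permutation (i,j,k) of (1,2,3) one has g_k = g_i ∘ g_j ∘ g_i⁻¹. -/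
/-- Explicit inverse of `modularAut i`. -/
def modularInv (i : Fin 3) (p : (Fin 3 → ℂ) × (Fin 4 → ℂ)) :
    (Fin 3 → ℂ) × (Fin 4 → ℂ) :=
  ⟨fun m => if m = i then p.1 (i + 1)
            else if m = i + 1 then p.2 (Fin.castSucc i) - p.1 i - p.1 (i + 2) * p.1 (i + 1)
            else p.1 m,
   fun m => if m = Fin.castSucc i then p.2 (Fin.castSucc (i + 1))
            else if m = Fin.castSucc (i + 1) then p.2 (Fin.castSucc i) else p.2 m⟩

lemma modularAut_left_inv (i : Fin 3) :
    Function.LeftInverse (modularInv i) (modularAut i) := by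
  intro p
  fin_cases i <;>
    refine Prod.ext (funext fun m => ?_) (funext fun m => ?_) <;> fin_cases m <;>
      simp [modularAut, modularInv, Fin.castSucc, Fin.castAdd, Fin.castLE] <;> ring

lemma modularAut_right_inv (i : Fin 3) :
    Function.RightInverse (modularInv i) (modularAut i) := by
  intro p
  fin_cases i <;>
    refine Prod.ext (funext fun m => ?_) (funext fun m => ?_) <;> fin_cases m <;>
      simp [modularAut, modularInv, Fin.castSucc, Fin.castAdd, Fin.castLE] <;> ring

lemma modularAut_key (i : Fin 3) :
    modularAut (i + 2) ∘ modularAut i = modularAut i ∘ modularAut (i + 1) := by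
  funext p
  fin_cases i <;>
    refine Prod.ext (funext fun m => ?_) (funext fun m => ?_) <;> fin_cases m <;>
      simp [modularAut, Fin.castSucc, Fin.castAdd, Fin.castLE] <;> ring

/-- Each `gᵢ` is a bijection of `ℂ⁷`, and `g_k = gᵢ ∘ gⱼ ∘ gᵢ⁻¹` for each cyclic
permutation `(i, j, k) = (i, i+1, i+2)` of `(1,2,3)`. -/
theorem modularAut_bijective_and_conj :
    (∀ i : Fin 3, Function.Bijective (modularAut i)) ∧
      ∀ i : Fin 3, modularAut (i + 2) =
        modularAut i ∘ modularAut (i + 1) ∘ Function.invFun (modularAut i) := by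
  have hbij : ∀ i : Fin 3, Function.Bijective (modularAut i) := fun i =>
    ⟨(modularAut_left_inv i).injective, (modularAut_right_inv i).surjective⟩
  refine ⟨hbij, fun i => ?_⟩
  have hri : Function.RightInverse (Function.invFun (modularAut i)) (modularAut i) :=
    Function.rightInverse_invFun (hbij i).surjective
  calc modularAut (i + 2)
      = (modularAut (i + 2) ∘ modularAut i) ∘ Function.invFun (modularAut i) := by
        funext p; simp [Function.comp, hri p]
    _ = (modularAut i ∘ modularAut (i + 1)) ∘ Function.invFun (modularAut i) := by
        rw [modularAut_key]
    _ = modularAut i ∘ modularAut (i + 1) ∘ Function.invFun (modularAut i) := by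
        rw [Function.comp_assoc]
end

section
/- Let κ = (κ0,κ1,κ2,κ3,κ4) ∈ ℂ⁵ satisfy 2κ0 + κ1 + κ2 + κ3 + κ4 = 1. Define a_i(κ) = 2cos(πκ_i) for i = 1,2,3 and a_4(κ) = −2cos(πκ4), and set θ1(κ) = a_1(κ)·a_4(κ) + a_2(κ)·a_3(κ). Let σ0(κ) = (−κ0, κ1+κ0, κ2+κ0, κ3+κ0, κ4+κ0). Then θ1(σ0(κ)) = θ1(κ). -/
open Complex

/-- W-invariance of the cubic-surface parameter `θ₁` under the basic reflection `σ₀`: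
with `aᵢ(κ) = 2cos(πκᵢ)` for `i = 1,2,3`, `a₄(κ) = −2cos(πκ₄)`, and
`θ₁(κ) = a₁a₄ + a₂a₃`, one has `θ₁(σ₀(κ)) = θ₁(κ)` where
`σ₀(κ) = (−κ₀, κ₁+κ₀, κ₂+κ₀, κ₃+κ₀, κ₄+κ₀)`. -/
theorem theta1_sigma0_invariant (κ0 κ1 κ2 κ3 κ4 : ℂ)
    (h : 2 * κ0 + κ1 + κ2 + κ3 + κ4 = 1) :
    (2 * Complex.cos ((Real.pi : ℂ) * (κ1 + κ0))) *
        (-2 * Complex.cos ((Real.pi : ℂ) * (κ4 + κ0))) +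
      (2 * Complex.cos ((Real.pi : ℂ) * (κ2 + κ0))) *
        (2 * Complex.cos ((Real.pi : ℂ) * (κ3 + κ0))) =
    (2 * Complex.cos ((Real.pi : ℂ) * κ1)) * (-2 * Complex.cos ((Real.pi : ℂ) * κ4)) +
      (2 * Complex.cos ((Real.pi : ℂ) * κ2)) * (2 * Complex.cos ((Real.pi : ℂ) * κ3)) := by
  have h4 : κ4 = 1 - 2 * κ0 - κ1 - κ2 - κ3 := by linear_combination h
  subst h4
  have e4 : (Real.pi : ℂ) * ((1 - 2 * κ0 - κ1 - κ2 - κ3) + κ0)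
      = (Real.pi : ℂ) - (Real.pi : ℂ) * (κ0 + κ1 + κ2 + κ3) := by ring
  have e4' : (Real.pi : ℂ) * (1 - 2 * κ0 - κ1 - κ2 - κ3)
      = (Real.pi : ℂ) - (Real.pi : ℂ) * (κ0 + κ0 + κ1 + κ2 + κ3) := by ring
  rw [e4, e4', Complex.cos_pi_sub, Complex.cos_pi_sub]
  simp only [mul_add, Complex.cos_add, Complex.sin_add]
  ring_nf
  simp only [Complex.sin_sq]
  ring
end
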